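/- Let 1 < μ ≤ 2 and ω > 0. For any bounded measurable y : [0,1] → ℝ with |y(τ)| ≤ M for all τ, the family of functions x(t) := ∫_0^1 G(t,τ) y(τ) dτ is uniformly bounded by M · E_{μ,μ}(ω) and is equicontinuous on [0,1] (with modulus of continuity depending only on M, μ, ω). -/

import Mathlib

/-!
Both terms of `G(t,τ)` lie in `[0, E_{μ,μ}(ω)]` on the unit square: the factor
`E_{μ,1}(ω t^μ)/E_{μ,1}(ω)` lies in `[0,1]` and `s ↦ s^{μ-1} E_{μ,μ}(ω s^μ)` is bounded by
`E_{μ,μ}(ω)` on `[0,1]`, because Mittag-Leffler functions are nonnegative and monotone on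
`[0,∞)`. Hence `|G| ≤ E_{μ,μ}(ω)`, which integrates to the uniform bound. As `μ > 1`, the
truncated kernel `1_{τ≤t}(t-τ)^{μ-1}E_{μ,μ}(ω(t-τ)^μ)` is continuous, so `G` is uniformly
continuous on the compact square, and this uniform continuity gives a common modulus for all `x`.
-/

open Real

/-- Two-parameter Mittag-Leffler function `E_{μ,ν}(t) = ∑ t^k / Γ(μk + ν)`. -/
noncomputable def mittagLeffler (μ ν t : ℝ) : ℝ :=
  ∑' k : ℕ, t ^ k / Real.Gamma (μ * k + ν)

/-- Green's function of the BVP `ᶜD^μ x + y = ω x`, `x'(0) = 0`, `x(1) = 0`. -/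
noncomputable def greenG (μ ω t τ : ℝ) : ℝ :=
  mittagLeffler μ 1 (ω * t ^ μ) / mittagLeffler μ 1 ω *
      ((1 - τ) ^ (μ - 1) * mittagLeffler μ μ (ω * (1 - τ) ^ μ)) -
    (if τ ≤ t then (t - τ) ^ (μ - 1) * mittagLeffler μ μ (ω * (t - τ) ^ μ) else 0)

open Set MeasureTheory

section IntegralOperator

variable {a b M : ℝ} {y : ℝ → ℝ}

theorem Measurable.intervalIntegrable_of_abs_le (hy : Measurable y) (hyM : ∀ τ, |y τ| ≤ M) :
    IntervalIntegrable y volume a b :=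
  (intervalIntegrable_const (μ := volume) (c := M)).mono_fun' hy.aestronglyMeasurable
    (ae_of_all _ fun τ => hyM τ)

theorem abs_intervalIntegral_mul_le {K : ℝ → ℝ} {C : ℝ} (hK : ∀ τ ∈ uIcc a b, |K τ| ≤ C)
    (hyM : ∀ τ, |y τ| ≤ M) : |∫ τ in a..b, K τ * y τ| ≤ M * C * |b - a| := by
  have hbound : ∀ τ ∈ uIoc a b, ‖K τ * y τ‖ ≤ M * C := fun τ hτ => by
    have hKτ := hK τ (uIoc_subset_uIcc hτ)
    rw [norm_mul, mul_comm M]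
    exact mul_le_mul hKτ (hyM τ) (abs_nonneg _) ((abs_nonneg _).trans hKτ)
  simpa only [Real.norm_eq_abs] using intervalIntegral.norm_integral_le_of_norm_le_const hbound

theorem exists_pos_abs_intervalIntegral_mul_sub_lt {X : Type*} [PseudoMetricSpace X]
    {s : Set X} (hs : IsCompact s) {K : X → ℝ → ℝ}
    (hK : ContinuousOn (Function.uncurry K) (s ×ˢ uIcc a b)) (M : ℝ) {ε : ℝ} (hε : 0 < ε) :
    ∃ δ > 0, ∀ y : ℝ → ℝ, Measurable y → (∀ τ, |y τ| ≤ M) → ∀ t₁ ∈ s, ∀ t₂ ∈ s,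
      dist t₁ t₂ < δ →
        |(∫ τ in a..b, K t₁ τ * y τ) - ∫ τ in a..b, K t₂ τ * y τ| < ε := by
  obtain ⟨η, hη, hηε⟩ := exists_pos_mul_lt hε (|M| * |b - a|)
  obtain ⟨δ, hδ, hKδ⟩ := Metric.uniformContinuousOn_iff.1
    ((hs.prod isCompact_uIcc).uniformContinuousOn_of_continuous hK) η hη
  refine ⟨δ, hδ, fun y hy hyM t₁ ht₁ t₂ ht₂ ht => ?_⟩
  have hint : ∀ t ∈ s, IntervalIntegrable (fun τ => K t τ * y τ) volume a b := fun t ht =>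
    (hy.intervalIntegrable_of_abs_le hyM).continuousOn_mul
      (hK.comp (continuousOn_const.prodMk continuousOn_id) fun τ hτ => ⟨ht, hτ⟩)
  have hclose : ∀ τ ∈ uIcc a b, |K t₁ τ - K t₂ τ| ≤ η := fun τ hτ => by
    have := hKδ (t₁, τ) ⟨ht₁, hτ⟩ (t₂, τ) ⟨ht₂, hτ⟩ (by simpa [Prod.dist_eq] using ht)
    exact (Real.dist_eq _ _ ▸ this).le
  calc |(∫ τ in a..b, K t₁ τ * y τ) - ∫ τ in a..b, K t₂ τ * y τ|
      = |∫ τ in a..b, (K t₁ τ - K t₂ τ) * y τ| := by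
        rw [← intervalIntegral.integral_sub (hint t₁ ht₁) (hint t₂ ht₂)]
        simp only [sub_mul]
    _ ≤ |M| * η * |b - a| :=
        abs_intervalIntegral_mul_le hclose fun τ => (hyM τ).trans (le_abs_self M)
    _ = |M| * |b - a| * η := by ring
    _ < ε := hηε

end IntegralOperator

section MittagLeffler

variable {μ ν : ℝ}

theorem factorial_le_Gamma_mul_add (hμ : 1 ≤ μ) (hν : 1 ≤ ν) {k : ℕ} (hk : 1 ≤ k) :
    (k.factorial : ℝ) ≤ Gamma (μ * k + ν) := by
  have hk : (1 : ℝ) ≤ k := by exact_mod_cast hk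
  have hle : (k : ℝ) + 1 ≤ μ * k + ν := by nlinarith
  rw [← Gamma_nat_eq_factorial]
  exact Gamma_strictMonoOn_Ici.monotoneOn (by simp; linarith) (by simp; linarith) hle

theorem summable_mittagLeffler (hμ : 1 ≤ μ) (hν : 1 ≤ ν) (t : ℝ) :
    Summable fun k : ℕ => t ^ k / Gamma (μ * k + ν) := by
  refine (summable_pow_div_factorial |t|).of_norm_bounded_eventually ?_
  filter_upwards [Nat.cofinite_eq_atTop ▸ Filter.eventually_ge_atTop 1] with k hk
  have hfac := factorial_le_Gamma_mul_add hμ hν hk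
  have hfac_pos : (0 : ℝ) < k.factorial := by positivity
  rw [norm_div, norm_pow, Real.norm_eq_abs, Real.norm_of_nonneg (hfac_pos.le.trans hfac)]
  gcongr

theorem mittagLeffler_nonneg (hμ : 0 ≤ μ) (hν : 0 < ν) {t : ℝ} (ht : 0 ≤ t) :
    0 ≤ mittagLeffler μ ν t :=
  tsum_nonneg fun k => div_nonneg (pow_nonneg ht k) (Gamma_pos_of_pos (by positivity)).le

theorem monotoneOn_mittagLeffler (hμ : 1 ≤ μ) (hν : 1 ≤ ν) :
    MonotoneOn (mittagLeffler μ ν) (Ici 0) := fun s hs t _ hst =>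
  (summable_mittagLeffler hμ hν s).tsum_mono (summable_mittagLeffler hμ hν t) fun k =>
    div_le_div_of_nonneg_right (pow_le_pow_left₀ hs hst k)
      (Gamma_pos_of_pos (by positivity)).le

theorem continuous_mittagLeffler (hμ : 1 ≤ μ) (hν : 1 ≤ ν) :
    Continuous (mittagLeffler μ ν) := by
  refine continuous_iff_continuousAt.2 fun x => ?_
  have hcont : ContinuousOn (mittagLeffler μ ν) (Metric.ball 0 (|x| + 1)) := by
    refine continuousOn_tsum (fun k => (continuous_pow k).div_const _ |>.continuousOn)
      (summable_mittagLeffler hμ hν (|x| + 1)) fun k t ht => ?_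
    have ht : |t| ≤ |x| + 1 := by simpa using (mem_ball_zero_iff.1 ht).le
    rw [norm_div, norm_pow, Real.norm_eq_abs,
      Real.norm_of_nonneg (Gamma_pos_of_pos (by positivity)).le]
    gcongr
  exact hcont.continuousAt (Metric.isOpen_ball.mem_nhds (by simp))

theorem mittagLeffler_mul_rpow_le (hμ : 1 ≤ μ) (hν : 1 ≤ ν) {ω s : ℝ} (hω : 0 ≤ ω)
    (hs : s ∈ Icc (0 : ℝ) 1) : mittagLeffler μ ν (ω * s ^ μ) ≤ mittagLeffler μ ν ω :=
  monotoneOn_mittagLeffler hμ hν (mem_Ici.2 (mul_nonneg hω (rpow_nonneg hs.1 μ)))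
    (mem_Ici.2 hω) (mul_le_of_le_one_right hω (rpow_le_one hs.1 hs.2 (by linarith)))

end MittagLeffler

section Green

variable {μ ω : ℝ}

noncomputable def greenKernel (μ ω s : ℝ) : ℝ :=
  s ^ (μ - 1) * mittagLeffler μ μ (ω * s ^ μ)

theorem continuous_greenKernel (hμ : 1 < μ) : Continuous (greenKernel μ ω) :=
  (continuous_rpow_const (by linarith)).mul
    ((continuous_mittagLeffler hμ.le hμ.le).comp
      (continuous_const.mul (continuous_rpow_const (by linarith))))

theorem greenKernel_nonneg (hμ : 1 < μ) (hω : 0 ≤ ω) {s : ℝ} (hs : 0 ≤ s) :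
    0 ≤ greenKernel μ ω s :=
  mul_nonneg (rpow_nonneg hs _)
    (mittagLeffler_nonneg (by linarith) (by linarith) (mul_nonneg hω (rpow_nonneg hs μ)))

theorem greenKernel_le (hμ : 1 < μ) (hω : 0 ≤ ω) {s : ℝ} (hs : s ∈ Icc (0 : ℝ) 1) :
    greenKernel μ ω s ≤ mittagLeffler μ μ ω := by
  have hE : 0 ≤ mittagLeffler μ μ (ω * s ^ μ) :=
    mittagLeffler_nonneg (by linarith) (by linarith) (mul_nonneg hω (rpow_nonneg hs.1 μ))
  calc greenKernel μ ω s ≤ 1 * mittagLeffler μ μ (ω * s ^ μ) := by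
        unfold greenKernel
        gcongr
        exact rpow_le_one hs.1 hs.2 (by linarith)
    _ ≤ mittagLeffler μ μ ω := by
        rw [one_mul]
        exact mittagLeffler_mul_rpow_le hμ.le hμ.le hω hs

/-- Since `greenKernel μ ω 0 = 0`, the indicator `1_{τ≤t}` can be replaced by a `max`. -/
theorem greenG_eq_greenKernel (hμ : 1 < μ) (t τ : ℝ) :
    greenG μ ω t τ = mittagLeffler μ 1 (ω * t ^ μ) / mittagLeffler μ 1 ω *
      greenKernel μ ω (1 - τ) - greenKernel μ ω (max (t - τ) 0) := by
  unfold greenG greenKernel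
  split_ifs with h
  · rw [max_eq_left (sub_nonneg.2 h)]
  · rw [max_eq_right (by linarith), zero_rpow (by linarith), zero_mul]

theorem continuous_greenG (hμ : 1 < μ) : Continuous (Function.uncurry (greenG μ ω)) := by
  have hratio : Continuous fun t : ℝ => mittagLeffler μ 1 (ω * t ^ μ) / mittagLeffler μ 1 ω :=
    ((continuous_mittagLeffler hμ.le le_rfl).comp
      (continuous_const.mul (continuous_rpow_const (by linarith)))).div_const _
  have hK := continuous_greenKernel (ω := ω) hμ
  simp only [Function.uncurry_def, greenG_eq_greenKernel hμ]
  exact ((hratio.comp continuous_fst).mul (hK.comp (continuous_const.sub continuous_snd))).sub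
    (hK.comp ((continuous_fst.sub continuous_snd).max continuous_const))

theorem abs_greenG_le (hμ : 1 < μ) (hω : 0 ≤ ω) {t τ : ℝ} (ht : t ∈ Icc (0 : ℝ) 1)
    (hτ : τ ∈ Icc (0 : ℝ) 1) : |greenG μ ω t τ| ≤ mittagLeffler μ μ ω := by
  have hratio₀ : 0 ≤ mittagLeffler μ 1 (ω * t ^ μ) / mittagLeffler μ 1 ω :=
    div_nonneg (mittagLeffler_nonneg (by linarith) one_pos
      (mul_nonneg hω (rpow_nonneg ht.1 μ)))
      (mittagLeffler_nonneg (by linarith) one_pos hω)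
  have hratio₁ : mittagLeffler μ 1 (ω * t ^ μ) / mittagLeffler μ 1 ω ≤ 1 :=
    div_le_one_of_le₀ (mittagLeffler_mul_rpow_le hμ.le le_rfl hω ht)
      (mittagLeffler_nonneg (by linarith) one_pos hω)
  have h1τ : 1 - τ ∈ Icc (0 : ℝ) 1 := ⟨by linarith [hτ.2], by linarith [hτ.1]⟩
  have htτ : max (t - τ) 0 ∈ Icc (0 : ℝ) 1 :=
    ⟨le_max_right _ _, max_le (by linarith [ht.2, hτ.1]) zero_le_one⟩
  rw [greenG_eq_greenKernel hμ]
  refine abs_sub_le_of_nonneg_of_le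
    (mul_nonneg hratio₀ (greenKernel_nonneg hμ hω h1τ.1)) ?_
    (greenKernel_nonneg hμ hω htτ.1) (greenKernel_le hμ hω htτ)
  exact (mul_le_of_le_one_left (greenKernel_nonneg hμ hω h1τ.1) hratio₁).trans
    (greenKernel_le hμ hω h1τ)

end Green

theorem greenG_uniform_bound_equicontinuous_general (μ ω M : ℝ) (hμ1 : 1 < μ)
    (hω : 0 < ω) :
    (∀ y : ℝ → ℝ, Measurable y → (∀ τ, |y τ| ≤ M) →
      ∀ t ∈ Set.Icc (0 : ℝ) 1,
        |∫ τ in (0 : ℝ)..1, greenG μ ω t τ * y τ| ≤ M * mittagLeffler μ μ ω) ∧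
    (∀ ε > (0 : ℝ), ∃ δ > (0 : ℝ), ∀ y : ℝ → ℝ, Measurable y →
      (∀ τ, |y τ| ≤ M) → ∀ t₁ ∈ Set.Icc (0 : ℝ) 1, ∀ t₂ ∈ Set.Icc (0 : ℝ) 1,
        |t₁ - t₂| < δ →
          |(∫ τ in (0 : ℝ)..1, greenG μ ω t₁ τ * y τ) -
              ∫ τ in (0 : ℝ)..1, greenG μ ω t₂ τ * y τ| < ε) := by
  have hunit : uIcc (0 : ℝ) 1 = Icc 0 1 := uIcc_of_le zero_le_one
  refine ⟨fun y _ hyM t ht => ?_, fun ε hε => ?_⟩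
  · exact (abs_intervalIntegral_mul_le
      (fun τ hτ => abs_greenG_le hμ1 hω.le ht (hunit ▸ hτ)) hyM).trans_eq (by norm_num)
  · obtain ⟨δ, hδ, hmod⟩ := exists_pos_abs_intervalIntegral_mul_sub_lt isCompact_Icc
      ((continuous_greenG hμ1).continuousOn (s := Icc 0 1 ×ˢ uIcc 0 1)) M hε
    exact ⟨δ, hδ, fun y hy hyM t₁ ht₁ t₂ ht₂ ht =>
      hmod y hy hyM t₁ ht₁ t₂ ht₂ (by rwa [Real.dist_eq])⟩

/-- For bounded measurable `y` with `|y| ≤ M`, the functions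
`x(t) = ∫_0^1 G(t,τ) y(τ) dτ` are uniformly bounded by `M · E_{μ,μ}(ω)` and
equicontinuous on `[0,1]`, with a modulus depending only on `M`, `μ`, `ω`. -/
theorem greenG_uniform_bound_equicontinuous (μ ω M : ℝ) (hμ1 : 1 < μ)
    (hμ2 : μ ≤ 2) (hω : 0 < ω) (hM : 0 ≤ M) :
    (∀ y : ℝ → ℝ, Measurable y → (∀ τ, |y τ| ≤ M) →
      ∀ t ∈ Set.Icc (0 : ℝ) 1,
        |∫ τ in (0 : ℝ)..1, greenG μ ω t τ * y τ| ≤ M * mittagLeffler μ μ ω) ∧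
    (∀ ε > (0 : ℝ), ∃ δ > (0 : ℝ), ∀ y : ℝ → ℝ, Measurable y →
      (∀ τ, |y τ| ≤ M) → ∀ t₁ ∈ Set.Icc (0 : ℝ) 1, ∀ t₂ ∈ Set.Icc (0 : ℝ) 1,
        |t₁ - t₂| < δ →
          |(∫ τ in (0 : ℝ)..1, greenG μ ω t₁ τ * y τ) -
              ∫ τ in (0 : ℝ)..1, greenG μ ω t₂ τ * y τ| < ε) :=
  greenG_uniform_bound_equicontinuous_general μ ω M hμ1 hω
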